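/- Let X be a connected and locally path-connected topological space, x ∈ X, let p : E → X be a covering map with E connected, and let e ∈ p⁻¹(x). Then there exists a normal subgroup N of π₁(X,x) such that N is open (h⁻¹(N) is open in Ω(X,x)) and N ⊆ p_#(π₁(E,e)). -/

import Mathlib

/-!
The kernel of the monodromy action of `π₁(X, x)` on the fibre `p⁻¹(x)` is a normal subgroup, and
a loop in it lifts to a loop at `e`. It is open because the endpoint of a lift is locally constant
in the loop, uniformly in the starting point: subdivide a loop `γ₀` into arcs lying in evenly
covered sets `Uₖ`. If a loop `γ` maps each arc into `Uₖ` and each subdivision point into the path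
component of `Uₖ ∩ Uₖ₊₁` containing the corresponding point of `γ₀`, then the lifts of `γ` and `γ₀`
from a common point pass through the same sheets, hence end at the same point.
-/

open unitInterval

/-- The homotopy class of a loop, as an element of the fundamental group. -/
noncomputable def pathClass {X : Type*} [TopologicalSpace X] {x : X} (γ : Path x x) :
    FundamentalGroup X x :=
  FundamentalGroup.fromPath (X := TopCat.of X) (Quotient.mk (Path.Homotopic.setoid x x) γ)

/-- The image `p_#(π₁(E,e))` of the homomorphism induced on fundamental groups by a
continuous map `p : E → X` with `p e = x`, as a subset of `π₁(X,x)`. -/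
noncomputable def inducedImage {E X : Type*} [TopologicalSpace E] [TopologicalSpace X]
    {p : E → X} (hp : Continuous p) (e : E) {x : X} (hx : p e = x) :
    Set (FundamentalGroup X x) :=
  {g | ∃ γ : Path e e, g = pathClass ((γ.map hp).cast hx.symm hx.symm)}

open Set Topology Filter

theorem pathClass_surjective {X : Type*} [TopologicalSpace X] {x : X} :
    Function.Surjective (pathClass (x := x)) :=
  Quotient.exists_rep

namespace Bundle.Trivialization

variable {E X F F' : Type*} [TopologicalSpace E] [TopologicalSpace X] [TopologicalSpace F]
  [TopologicalSpace F'] {p : E → X}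

theorem snd_eq_of_isPreconnected [DiscreteTopology F] (τ : Trivialization F p) {S : Set E}
    (hS : IsPreconnected S) (hSτ : S ⊆ τ.source) {u v : E} (hu : u ∈ S) (hv : v ∈ S) :
    (τ u).2 = (τ v).2 :=
  hS.constant
    (continuous_snd.comp_continuousOn (τ.toOpenPartialHomeomorph.continuousOn.mono hSτ)) hu hv

theorem snd_apply_eq_of_mapsTo [DiscreteTopology F] (τ : Trivialization F p) (Γ : C(I, E))
    {a b : I} (hab : a ≤ b) (h : MapsTo (p ∘ Γ) (Icc a b) τ.baseSet) : (τ (Γ a)).2 = (τ (Γ b)).2 :=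
  τ.snd_eq_of_isPreconnected (isPreconnected_Icc.image _ Γ.continuous.continuousOn)
    (by rintro _ ⟨s, hs, rfl⟩; exact τ.mem_source.2 (h hs))
    ⟨a, left_mem_Icc.2 hab, rfl⟩ ⟨b, right_mem_Icc.2 hab, rfl⟩

theorem snd_eq_of_joinedIn [DiscreteTopology F'] (τ : Trivialization F p)
    (τ' : Trivialization F' p) {u v : E} (hu : u ∈ τ.source) (hv : v ∈ τ.source)
    (huv : (τ u).2 = (τ v).2)
    (hj : JoinedIn (τ.baseSet ∩ τ'.baseSet) (p u) (p v)) : (τ' u).2 = (τ' v).2 := by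
  obtain ⟨β, hβ⟩ := hj
  let B : I → E := fun s ↦ τ.toOpenPartialHomeomorph.symm (β s, (τ u).2)
  have hB : Continuous B := τ.toOpenPartialHomeomorph.continuousOn_symm.comp_continuous
    (by fun_prop) fun s ↦ τ.mem_target.2 (hβ s).1
  have hB0 : B 0 = u := by simp [B, τ.symm_apply_mk_proj hu]
  have hB1 : B 1 = v := by simp [B, huv, τ.symm_apply_mk_proj hv]
  refine τ'.snd_eq_of_isPreconnected (isPreconnected_range hB) ?_ ⟨0, hB0⟩ ⟨1, hB1⟩
  rintro _ ⟨s, rfl⟩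
  rw [τ'.mem_source, τ.proj_symm_apply' (hβ s).1]
  exact (hβ s).2

theorem apply_one_eq_of_chain {F : ℕ → Type*} [∀ k, TopologicalSpace (F k)]
    [∀ k, DiscreteTopology (F k)] (τ : ∀ k, Trivialization (F k) p) {t : ℕ → I}
    (ht : Monotone t) (ht0 : t 0 = 0) {n : ℕ} (htn : t (n + 1) = 1) {Γ Γ₀ : C(I, E)}
    (hΓ : ∀ k ≤ n, MapsTo (p ∘ Γ) (Icc (t k) (t (k + 1))) (τ k).baseSet)
    (hΓ₀ : ∀ k ≤ n, MapsTo (p ∘ Γ₀) (Icc (t k) (t (k + 1))) (τ k).baseSet)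
    (hjoin : ∀ k < n,
      JoinedIn ((τ k).baseSet ∩ (τ (k + 1)).baseSet) (p (Γ₀ (t (k + 1)))) (p (Γ (t (k + 1)))))
    (h0 : Γ 0 = Γ₀ 0) (h1 : p (Γ 1) = p (Γ₀ 1)) : Γ 1 = Γ₀ 1 := by
  have mem_right {Λ : C(I, E)}
      (hΛ : ∀ k ≤ n, MapsTo (p ∘ Λ) (Icc (t k) (t (k + 1))) (τ k).baseSet) {k : ℕ} (hk : k ≤ n) :
      Λ (t (k + 1)) ∈ (τ k).source :=
    (τ k).mem_source.2 (hΛ k hk ⟨ht k.le_succ, le_rfl⟩)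
  have step {k : ℕ} (hk : k ≤ n) (h : ((τ k) (Γ (t k))).2 = ((τ k) (Γ₀ (t k))).2) :
      ((τ k) (Γ (t (k + 1)))).2 = ((τ k) (Γ₀ (t (k + 1)))).2 := by
    rw [← (τ k).snd_apply_eq_of_mapsTo Γ (ht k.le_succ) (hΓ k hk),
      ← (τ k).snd_apply_eq_of_mapsTo Γ₀ (ht k.le_succ) (hΓ₀ k hk), h]
  have same_sheet : ∀ k ≤ n, ((τ k) (Γ (t k))).2 = ((τ k) (Γ₀ (t k))).2 := by
    intro k hk
    induction k with
    | zero => rw [ht0, h0]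
    | succ k ih =>
      have hk' : k ≤ n := k.le_succ.trans hk
      exact ((τ k).snd_eq_of_joinedIn (τ (k + 1)) (mem_right hΓ₀ hk') (mem_right hΓ hk')
        (step hk' (ih hk')).symm (hjoin k hk)).symm
  have hlast := step le_rfl (same_sheet n le_rfl)
  rw [htn] at hlast
  have hΓ1 := mem_right hΓ le_rfl
  have hΓ₀1 := mem_right hΓ₀ le_rfl
  rw [htn] at hΓ1 hΓ₀1
  rw [← (τ n).symm_apply_mk_proj hΓ1, ← (τ n).symm_apply_mk_proj hΓ₀1, h1, hlast]

end Bundle.Trivialization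

namespace IsCoveringMap

variable {E X : Type*} [TopologicalSpace E] [TopologicalSpace X] {p : E → X}

theorem eventually_lift_apply_one_eq [LocallyPathConnectedSpace X] (cov : IsCoveringMap p)
    (γ₀ : C(I, X)) :
    ∀ᶠ γ : C(I, X) in 𝓝 γ₀, ∀ Γ Γ₀ : C(I, E),
      p ∘ Γ = γ → p ∘ Γ₀ = γ₀ → Γ 0 = Γ₀ 0 → γ 1 = γ₀ 1 → Γ 1 = Γ₀ 1 := by
  -- `toTrivialization` needs nonempty fibres, which a lift of `γ₀` provides.
  by_cases hlift : ∃ Γ₁ : C(I, E), p ∘ Γ₁ = γ₀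
  swap
  · push Not at hlift
    exact .of_forall fun _ _ Γ₀ _ hΓ₀ ↦ (hlift Γ₀ hΓ₀).elim
  obtain ⟨Γ₁, hΓ₁⟩ := hlift
  have (s : I) : Nonempty (p ⁻¹' {γ₀ s}) := ⟨⟨Γ₁ s, congr_fun hΓ₁ s⟩⟩
  have (s : I) : DiscreteTopology (p ⁻¹' {γ₀ s}) := (cov (γ₀ s)).discreteTopology_fiber
  let τ (s : I) := (cov (γ₀ s)).toTrivialization
  obtain ⟨t, ht0, ht, ⟨n, hn⟩, hsub⟩ := exists_monotone_Icc_subset_open_cover_unitInterval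
    (c := fun s ↦ γ₀ ⁻¹' (τ s).baseSet) (fun s ↦ (τ s).open_baseSet.preimage γ₀.continuous)
    (fun s _ ↦ mem_iUnion.2 ⟨s, (cov _).mem_toTrivialization_baseSet⟩)
  choose i hi using hsub
  have hmaps (k : ℕ) :
      ∀ᶠ γ : C(I, X) in 𝓝 γ₀, MapsTo γ (Icc (t k) (t (k + 1))) (τ (i k)).baseSet :=
    ContinuousMap.eventually_mapsTo isClosed_Icc.isCompact (τ _).open_baseSet (hi k)
  have hjoin (k : ℕ) : ∀ᶠ γ : C(I, X) in 𝓝 γ₀,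
      γ (t (k + 1)) ∈ pathComponentIn ((τ (i k)).baseSet ∩ (τ (i (k + 1))).baseSet)
        (γ₀ (t (k + 1))) :=
    (continuous_eval_const _).continuousAt.eventually_mem <|
      (((τ _).open_baseSet.inter (τ _).open_baseSet).pathComponentIn _).mem_nhds <|
        mem_pathComponentIn_self
          ⟨hi k ⟨ht k.le_succ, le_rfl⟩, hi (k + 1) ⟨le_rfl, ht (k + 1).le_succ⟩⟩
  filter_upwards [(finite_le_nat n).eventually_all.2 fun k _ ↦ hmaps k,
    (finite_le_nat n).eventually_all.2 fun k _ ↦ hjoin k] with γ hγmaps hγjoin Γ Γ₀ hΓ hΓ₀ h0 h1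
  refine Bundle.Trivialization.apply_one_eq_of_chain (fun k ↦ τ (i k)) ht ht0 (hn _ n.le_succ)
    (fun k hk ↦ ?_) (fun k _ ↦ ?_) (fun k hk ↦ ?_) h0 ?_
  · rw [hΓ]; exact hγmaps k hk
  · rw [hΓ₀]; exact hi k
  · rw [← Function.comp_apply (f := p), ← Function.comp_apply (f := p) (g := Γ), hΓ, hΓ₀]
    exact hγjoin k hk.le
  · exact (congr_fun hΓ 1).trans (h1.trans (congr_fun hΓ₀ 1).symm)

theorem pathClass_mem_ker_monodromyPerm_iff (cov : IsCoveringMap p) {x : X} (γ : Path x x) :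
    pathClass γ ∈ (cov.monodromyPerm x).ker ↔
      ∀ e (he : p e = x), cov.liftPath γ e (γ.source.trans he.symm) 1 = e := by
  simp only [MonoidHom.mem_ker, Equiv.ext_iff, coe_monodromyPerm, Equiv.Perm.coe_one, id_eq,
    Subtype.forall, Subtype.ext_iff]
  rfl

theorem ker_monodromyPerm_subset_inducedImage (cov : IsCoveringMap p) (e : E) :
    ((cov.monodromyPerm (p e)).ker : Set (FundamentalGroup X (p e))) ⊆
      inducedImage cov.continuous e rfl := by
  intro g hg
  obtain ⟨γ, rfl⟩ := pathClass_surjective g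
  have hΓ1 := (cov.pathClass_mem_ker_monodromyPerm_iff γ).1 hg e rfl
  refine ⟨⟨cov.liftPath γ e γ.source, cov.liftPath_zero .., hΓ1⟩, congrArg pathClass ?_⟩
  ext s
  exact (congr_fun (cov.liftPath_lifts γ e γ.source) s).symm

theorem isOpen_setOf_pathClass_mem_ker_monodromyPerm [LocallyPathConnectedSpace X]
    (cov : IsCoveringMap p) (x : X) :
    IsOpen {γ : Path x x | pathClass γ ∈ (cov.monodromyPerm x).ker} := by
  simp only [cov.pathClass_mem_ker_monodromyPerm_iff]
  refine isOpen_iff_mem_nhds.2 fun γ₀ hγ₀ ↦ ?_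
  filter_upwards [continuous_induced_dom.continuousAt.eventually
    (cov.eventually_lift_apply_one_eq γ₀)] with γ hγ e he
  rw [hγ _ _ (cov.liftPath_lifts ..) (cov.liftPath_lifts ..)
    ((cov.liftPath_zero ..).trans (cov.liftPath_zero ..).symm) (γ.target.trans γ₀.target.symm)]
  exact hγ₀ e he

end IsCoveringMap

theorem exists_open_normal_subgroup_le_inducedImage_of_coveringMap_general
    {X E : Type*} [TopologicalSpace X] [TopologicalSpace E]
    [LocallyPathConnectedSpace X]
    {p : E → X} (hcov : IsCoveringMap p)
    (x : X) (e : E) (he : p e = x) :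
    ∃ N : Subgroup (FundamentalGroup X x), N.Normal ∧
      IsOpen {γ : Path x x | pathClass γ ∈ N} ∧
      (N : Set (FundamentalGroup X x)) ⊆ inducedImage hcov.continuous e he := by
  subst he
  exact ⟨(hcov.monodromyPerm _).ker, inferInstance,
    hcov.isOpen_setOf_pathClass_mem_ker_monodromyPerm _,
    hcov.ker_monodromyPerm_subset_inducedImage e⟩

/-- If `X` is connected and locally path-connected and `p : E → X` is a covering map
(a continuous surjection with evenly covered neighborhoods) with `E` connected and
`p e = x`, then there is an open normal subgroup `N` of `π₁(X,x)` contained in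
`p_#(π₁(E,e))`. -/
theorem exists_open_normal_subgroup_le_inducedImage_of_coveringMap
    {X E : Type*} [TopologicalSpace X] [TopologicalSpace E]
    [ConnectedSpace X] [LocallyPathConnectedSpace X] [ConnectedSpace E]
    {p : E → X} (hcov : IsCoveringMap p) (hsurj : Function.Surjective p)
    (x : X) (e : E) (he : p e = x) :
    ∃ N : Subgroup (FundamentalGroup X x), N.Normal ∧
      IsOpen {γ : Path x x | pathClass γ ∈ N} ∧
      (N : Set (FundamentalGroup X x)) ⊆ inducedImage hcov.continuous e he :=
  exists_open_normal_subgroup_le_inducedImage_of_coveringMap_general hcov x e he
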